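/- Let E_A = (d/d⁺)·(I+V)/2 with d⁺ = d(d+1)/2. For every channel-positive operator w on C^d ⊗ C^d (i.e., w^{T_A} ≥ 0) with Tr w = 1, one has 1/(d+1) ≤ Tr(w E_A) ≤ 1, and both bounds are attained. -/

import Mathlib

open Matrix Kronecker BigOperators
open scoped ComplexOrder

/-- The swap operator `V = ∑ i j, |ij⟩⟨ji|` on `C^d ⊗ C^d`. -/
noncomputable def swapOp (d : ℕ) : Matrix (Fin d × Fin d) (Fin d × Fin d) ℂ :=
  fun p q => if p.1 = q.2 ∧ p.2 = q.1 then 1 else 0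

/-- Partial transpose on the first tensor factor. -/
noncomputable def ptransposeA {d : ℕ} (ρ : Matrix (Fin d × Fin d) (Fin d × Fin d) ℂ) :
    Matrix (Fin d × Fin d) (Fin d × Fin d) ℂ :=
  fun p q => ρ (q.1, p.2) (p.1, q.2)

/-- Twirled agreement POVM element `E_A = (d/d⁺) (I+V)/2`, `d⁺ = d(d+1)/2`. -/
noncomputable def agreePOVM (d : ℕ) : Matrix (Fin d × Fin d) (Fin d × Fin d) ℂ :=
  ((d : ℝ) / ((d : ℝ) * ((d : ℝ) + 1) / 2)) •
    ((1 / 2 : ℝ) • ((1 : Matrix (Fin d × Fin d) (Fin d × Fin d) ℂ) + swapOp d))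

/-!
Writing `ρ = w^{T_A}`, one has `Tr(w E_A) = (Tr w + Tr(w V)) / (d + 1)` and
`Tr(w V) = Tr(ρ V^{T_A}) = ∑ i j, ρ (i,i) (j,j) = d ⟨Φ⁺|ρ|Φ⁺⟩`. Since `ρ` is positive semidefinite
with trace one, this lies in `[0, d]`: it is the all-ones quadratic form of a principal submatrix of
`ρ`, and the `2 × 2` minors give `ρ p q + ρ q p ≤ ρ p p + ρ q q`. The lower bound is attained by the
product state `|01⟩⟨01|`, orthogonal to `|Φ⁺⟩`, and the upper one by `V / d`, whose partial
transpose is `|Φ⁺⟩⟨Φ⁺|`.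
-/

namespace Matrix.PosSemidef

variable {𝕜 n m : Type*} [RCLike 𝕜] [Fintype n] {A : Matrix n n 𝕜}

theorem sum_apply_nonneg (hA : A.PosSemidef) : 0 ≤ ∑ i, ∑ j, A i j := by
  simpa [dotProduct, mulVec, Finset.mul_sum] using hA.dotProduct_mulVec_nonneg (fun _ => 1)

theorem apply_add_apply_le (hA : A.PosSemidef) (i j : n) : A i j + A j i ≤ A i i + A j j := by
  classical
  have h := hA.dotProduct_mulVec_nonneg (Pi.single i 1 - Pi.single j 1)
  rw [star_sub, ← Pi.single_star, ← Pi.single_star, star_one] at h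
  simp only [mulVec_sub, mulVec_single_one, sub_dotProduct, dotProduct_sub, single_dotProduct,
    one_mul, col_apply] at h
  rw [← sub_nonneg]
  convert h using 1
  ring

theorem sum_apply_le_card_mul_trace (hA : A.PosSemidef) :
    ∑ i, ∑ j, A i j ≤ Fintype.card n * A.trace := by
  have h : ∑ i, ∑ j, (A i j + A j i) ≤ ∑ i, ∑ j, (A i i + A j j) :=
    Finset.sum_le_sum fun i _ => Finset.sum_le_sum fun j _ => hA.apply_add_apply_le i j
  simp only [Finset.sum_add_distrib, Finset.sum_const, Finset.card_univ, nsmul_eq_mul] at h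
  rw [Finset.sum_comm (f := fun i j => A j i), ← Finset.mul_sum, ← two_mul, ← two_mul] at h
  exact le_of_mul_le_mul_left h two_pos

theorem trace_submatrix_le (hA : A.PosSemidef) [Fintype m] {e : m → n} (he : Function.Injective e) :
    (A.submatrix e e).trace ≤ A.trace := by
  classical
  calc
    (A.submatrix e e).trace = ∑ k ∈ Finset.univ.map ⟨e, he⟩, A k k := by
      rw [Finset.sum_map]; rfl
    _ ≤ A.trace := Finset.sum_le_sum_of_subset_of_nonneg (Finset.subset_univ _)
      fun _ _ _ => hA.diag_nonneg

end Matrix.PosSemidef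

section PartialTranspose

variable {d : ℕ}

/-- The unnormalised maximally entangled vector `√d |Φ⁺⟩`. -/
def maxEntangledVec (d : ℕ) : Fin d × Fin d → ℂ := fun p => if p.1 = p.2 then 1 else 0

theorem ptransposeA_smul (c : ℂ) (w : Matrix (Fin d × Fin d) (Fin d × Fin d) ℂ) :
    ptransposeA (c • w) = c • ptransposeA w := rfl

theorem trace_ptransposeA (w : Matrix (Fin d × Fin d) (Fin d × Fin d) ℂ) :
    (ptransposeA w).trace = w.trace := rfl

theorem ptransposeA_single (a b c e : Fin d) (r : ℂ) :
    ptransposeA (single (a, b) (c, e) r) = single (c, b) (a, e) r := by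
  ext p q
  simp only [ptransposeA, single_apply, Prod.ext_iff]
  grind

theorem ptransposeA_swapOp :
    ptransposeA (swapOp d) = vecMulVec (maxEntangledVec d) (star (maxEntangledVec d)) := by
  ext p q
  simp only [ptransposeA, swapOp, vecMulVec_apply, maxEntangledVec, Pi.star_apply]
  split_ifs <;> simp_all

theorem trace_swapOp : (swapOp d).trace = d := by
  simp [trace, swapOp, Fintype.sum_prod_type, ite_and]

theorem trace_mul_swapOp (w : Matrix (Fin d × Fin d) (Fin d × Fin d) ℂ) :
    (w * swapOp d).trace = ∑ i, ∑ j, ptransposeA w (i, i) (j, j) := by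
  simp [trace, mul_apply, swapOp, ptransposeA, Fintype.sum_prod_type, ite_and]
  exact Finset.sum_comm

theorem trace_mul_agreePOVM (hd : d ≠ 0) (w : Matrix (Fin d × Fin d) (Fin d × Fin d) ℂ) :
    (w * agreePOVM d).trace = ((1 / ((d : ℝ) + 1) : ℝ) : ℂ) * (w.trace + (w * swapOp d).trace) := by
  rw [agreePOVM, smul_smul, Matrix.mul_smul, trace_smul, Matrix.mul_add, Matrix.mul_one,
    trace_add, Complex.real_smul]
  congr 2
  field_simp

variable {w : Matrix (Fin d × Fin d) (Fin d × Fin d) ℂ}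

theorem trace_mul_swapOp_nonneg (hw : (ptransposeA w).PosSemidef) : 0 ≤ (w * swapOp d).trace := by
  rw [trace_mul_swapOp]
  exact (hw.submatrix fun i => (i, i)).sum_apply_nonneg

theorem trace_mul_swapOp_le (hw : (ptransposeA w).PosSemidef) :
    (w * swapOp d).trace ≤ d * w.trace := by
  have hinj : Function.Injective fun i : Fin d => (i, i) := fun i j h => (Prod.ext_iff.mp h).1
  rw [trace_mul_swapOp, ← trace_ptransposeA]
  calc _ ≤ _ := (hw.submatrix fun i => (i, i)).sum_apply_le_card_mul_trace
    _ ≤ _ := by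
      rw [Fintype.card_fin]
      exact mul_le_mul_of_nonneg_left (hw.trace_submatrix_le hinj) (Nat.cast_nonneg d)

theorem exists_ptransposeA_posSemidef_trace_mul_swapOp_eq_zero (hd : 2 ≤ d) :
    ∃ w : Matrix (Fin d × Fin d) (Fin d × Fin d) ℂ,
      (ptransposeA w).PosSemidef ∧ w.trace = 1 ∧ (w * swapOp d).trace = 0 := by
  set x : Fin d × Fin d := (⟨0, by omega⟩, ⟨1, by omega⟩)
  refine ⟨single x x 1, ?_, trace_single_eq_same _ _, ?_⟩
  · rw [ptransposeA_single, ← diagonal_single]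
    exact PosSemidef.diagonal (Pi.single_nonneg.mpr zero_le_one)
  · rw [trace_mul_swapOp, ptransposeA_single]
    refine Finset.sum_eq_zero fun i _ => Finset.sum_eq_zero fun j _ => if_neg ?_
    rintro ⟨h, -⟩
    simp only [Prod.ext_iff, Fin.ext_iff] at h
    omega

theorem exists_ptransposeA_posSemidef_trace_mul_swapOp_eq_dim (hd : d ≠ 0) :
    ∃ w : Matrix (Fin d × Fin d) (Fin d × Fin d) ℂ,
      (ptransposeA w).PosSemidef ∧ w.trace = 1 ∧ (w * swapOp d).trace = d := by
  refine ⟨(d : ℂ)⁻¹ • swapOp d, ?_, ?_, ?_⟩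
  · rw [ptransposeA_smul, ptransposeA_swapOp]
    exact (posSemidef_vecMulVec_self_star _).smul (by positivity)
  · rw [trace_smul, trace_swapOp, smul_eq_mul, inv_mul_cancel₀ (Nat.cast_ne_zero.mpr hd)]
  · simp [trace_mul_swapOp, ptransposeA_swapOp, vecMulVec_apply, maxEntangledVec]
    field_simp

end PartialTranspose

theorem stmt11 (d : ℕ) (hd : 2 ≤ d) :
    (∀ w : Matrix (Fin d × Fin d) (Fin d × Fin d) ℂ,
        (ptransposeA w).PosSemidef → w.trace = 1 →
        ((1 / ((d : ℝ) + 1) : ℝ) : ℂ) ≤ (w * agreePOVM d).trace ∧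
          (w * agreePOVM d).trace ≤ 1) ∧
    (∃ w : Matrix (Fin d × Fin d) (Fin d × Fin d) ℂ,
        (ptransposeA w).PosSemidef ∧ w.trace = 1 ∧
        (w * agreePOVM d).trace = ((1 / ((d : ℝ) + 1) : ℝ) : ℂ)) ∧
    (∃ w : Matrix (Fin d × Fin d) (Fin d × Fin d) ℂ,
        (ptransposeA w).PosSemidef ∧ w.trace = 1 ∧
        (w * agreePOVM d).trace = 1) := by
  have hd0 : d ≠ 0 := by omega
  have hc : (0 : ℂ) ≤ ((1 / ((d : ℝ) + 1) : ℝ) : ℂ) := Complex.zero_le_real.mpr (by positivity)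
  have hc_mul : ((1 / ((d : ℝ) + 1) : ℝ) : ℂ) * (1 + d) = 1 := by
    push_cast
    field_simp
    ring
  refine ⟨fun w hw htr => ?_, ?_, ?_⟩
  · have hle := trace_mul_swapOp_le hw
    rw [htr, mul_one] at hle
    rw [trace_mul_agreePOVM hd0, htr]
    refine ⟨le_mul_of_one_le_right hc (le_add_of_nonneg_right (trace_mul_swapOp_nonneg hw)), ?_⟩
    calc _ ≤ ((1 / ((d : ℝ) + 1) : ℝ) : ℂ) * (1 + d) := by gcongr
      _ = 1 := hc_mul
  · obtain ⟨w, hw, htr, hV⟩ := exists_ptransposeA_posSemidef_trace_mul_swapOp_eq_zero hd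
    exact ⟨w, hw, htr, by rw [trace_mul_agreePOVM hd0, htr, hV, add_zero, mul_one]⟩
  · obtain ⟨w, hw, htr, hV⟩ := exists_ptransposeA_posSemidef_trace_mul_swapOp_eq_dim hd0
    exact ⟨w, hw, htr, by rw [trace_mul_agreePOVM hd0, htr, hV, hc_mul]⟩
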